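/- Let μ be the Gauss measure on [0,1] and let a_k(x) denote the k-th continued fraction digit of x. For any c > 0, the set of x ∈ [0,1] for which there exists m₀ ∈ ℕ such that for all m ≥ m₀ one has max_{1≤k≤m} a_k(x) ≥ c·m, has μ-measure zero. -/

import Mathlib

/-!
The Gauss measure is equivalent to Lebesgue measure `λ` on `[0, 1]`, so it suffices to work with
`λ` on the irrationals of `(0, 1)`. There the digits are quasi-independent: the inverse branches
of `G^n` (`G` the Gauss map) are Möbius maps `y ↦ (p + p' y) / (q + q' y)` with `0 ≤ q' ≤ q`, so
their derivative varies by a factor at most `4` on `(0, 1)`. Hence for a union `A` of rank-`n`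
cylinders and any `B`, the measure of `A ∩ G⁻ⁿ B` lies between `λ A · λ B / 4` and `4 λ A · λ B`.
This gives `λ (a_k ≥ N) ≤ 4 / N` and `λ (a_1, …, a_R < M) ≥ (1 - 4/M)^R`.

Fix a ratio `L ≥ 2` and look at the scales `m = L^j`. If `max_{k ≤ L^{j+1}} a_k ≥ c L^{j+1}`, then
either one of the first `L^j` digits is `≥ c L^{j+1}`, which has measure `≤ 4 / (c L)`, or some
digit in the block `(L^j, L^{j+1}]` is; given the first `L^j` digits, the latter has relative
measure at most `1 - e^{-8/c} / 4`. Iterating over the scales, the set in question has measure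
`O(1 / L)` for every `L`, hence measure zero.
-/

open MeasureTheory Filter Set

/-- The Gauss map `x ↦ 1/x mod 1`. -/
noncomputable def gaussMap (x : ℝ) : ℝ := Int.fract x⁻¹

/-- The `k`-th continued fraction digit `a_k(x) = ⌊1 / G^{k-1}(x)⌋` (for `k ≥ 1`). -/
noncomputable def cfDigit (k : ℕ) (x : ℝ) : ℤ := ⌊(gaussMap^[k - 1] x)⁻¹⌋

/-- The Gauss measure on `[0,1]`, with density `(1/log 2) · 1/(1+x)` with respect to
Lebesgue measure. -/
noncomputable def gaussMeasure : Measure ℝ :=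
  (volume.restrict (Set.Icc (0 : ℝ) 1)).withDensity
    fun x => ENNReal.ofReal ((Real.log 2)⁻¹ * (1 + x)⁻¹)

open scoped ENNReal

lemma volume_image_mul_le_of_abs_deriv_le_mul {U s t : Set ℝ} {f f' : ℝ → ℝ} {C : ℝ}
    (hf : ∀ x ∈ U, HasDerivWithinAt f (f' x) U x) (hinj : InjOn f U)
    (hC : ∀ x ∈ U, ∀ y ∈ U, |f' x| ≤ C * |f' y|)
    (hs : MeasurableSet s) (ht : MeasurableSet t) (hsU : s ⊆ U) (htU : t ⊆ U) :
    volume (f '' s) * volume t ≤ ENNReal.ofReal C * volume s * volume (f '' t) := by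
  have himage : ∀ r ⊆ U, MeasurableSet r →
      volume (f '' r) = ∫⁻ x in r, ENNReal.ofReal |f' x| := fun r hrU hr => by
    simpa using lintegral_image_eq_lintegral_abs_deriv_mul hr
      (fun x hx => (hf x (hrU hx)).mono hrU) (hinj.mono hrU) 1
  rw [himage s hsU hs, himage t htU ht]
  calc (∫⁻ x in s, ENNReal.ofReal |f' x|) * volume t
      ≤ ∫⁻ x in s, ENNReal.ofReal |f' x| * volume t := lintegral_mul_const_le _ _
    _ ≤ ∫⁻ _ in s, ENNReal.ofReal C * ∫⁻ y in t, ENNReal.ofReal |f' y| := by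
        refine setLIntegral_mono' hs fun x hx => ?_
        rw [← lintegral_const_mul' _ _ ENNReal.ofReal_ne_top, ← setLIntegral_const]
        refine setLIntegral_mono' ht fun y hy => ?_
        rw [← ENNReal.ofReal_mul' (abs_nonneg _)]
        exact ENNReal.ofReal_le_ofReal (hC x (hsU hx) y (htU hy))
    _ = ENNReal.ofReal C * volume s * ∫⁻ y in t, ENNReal.ofReal |f' y| := by
        rw [setLIntegral_const]
        ring

section MeasureDiff

variable {α : Type*} [MeasurableSpace α] {μ : Measure α} {A T : Set α} {r : ℝ≥0∞}

lemma measure_diff_le_one_sub_mul (hT : MeasurableSet T) (hA : μ A ≠ ∞)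
    (h : r * μ A ≤ μ (A ∩ T)) : μ (A \ T) ≤ (1 - r) * μ A := by
  have hsplit : μ (A \ T) = μ A - μ (A ∩ T) := by
    rw [← measure_inter_add_sdiff A hT, ENNReal.add_sub_cancel_left
      (measure_ne_top_of_subset inter_subset_left hA)]
  rw [hsplit, ENNReal.sub_mul fun _ _ => hA, one_mul]
  exact tsub_le_tsub_left h _

lemma one_sub_mul_le_measure_diff (hA : μ A ≠ ∞) (h : μ (A ∩ T) ≤ r * μ A) :
    (1 - r) * μ A ≤ μ (A \ T) := by
  rw [ENNReal.sub_mul fun _ _ => hA, one_mul]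
  calc μ A - r * μ A ≤ μ A - μ (A ∩ T) := tsub_le_tsub_left h _
    _ ≤ μ (A \ (A ∩ T)) := le_measure_sdiff
    _ = μ (A \ T) := by rw [sdiff_self_inter]

end MeasureDiff

lemma Real.exp_neg_le_one_sub_pow {t : ℝ} (ht0 : 0 ≤ t) (ht : t ≤ 1 / 2) (R : ℕ) :
    Real.exp (-(2 * t * R)) ≤ (1 - t) ^ R := by
  have hstep : Real.exp (-(2 * t)) ≤ 1 - t := by
    rw [Real.exp_neg, inv_le_iff_one_le_mul₀' (Real.exp_pos _)]
    nlinarith [Real.add_one_le_exp (2 * t)]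
  calc Real.exp (-(2 * t * R)) = Real.exp (-(2 * t)) ^ R := by
        rw [← Real.exp_nat_mul]; ring_nf
    _ ≤ (1 - t) ^ R := pow_le_pow_left₀ (Real.exp_pos _).le hstep R

lemma le_div_one_sub_of_le_add_mul {v : ℕ → ℝ} {a ρ σ : ℝ} (hρ0 : 0 ≤ ρ) (hρ1 : ρ < 1)
    (hv : ∀ i, v (i + 1) ≤ a + ρ * v i) (hσ : ∀ i, σ ≤ v i) : σ ≤ a / (1 - ρ) := by
  set K := a / (1 - ρ)
  have hK : a = K * (1 - ρ) := (div_mul_cancel₀ a (sub_pos.2 hρ1).ne').symm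
  have hdecay : ∀ i, v i - K ≤ ρ ^ i * (v 0 - K) := fun i => by
    induction i with
    | zero => simp
    | succ i ih =>
      calc v (i + 1) - K ≤ ρ * (v i - K) := by linarith [hv i]
        _ ≤ ρ * (ρ ^ i * (v 0 - K)) := mul_le_mul_of_nonneg_left ih hρ0
        _ = ρ ^ (i + 1) * (v 0 - K) := by ring
  have hlim : Tendsto (fun i => ρ ^ i * (v 0 - K)) atTop (nhds 0) := by
    simpa using (tendsto_pow_atTop_nhds_zero_of_lt_one hρ0 hρ1).mul_const (v 0 - K)
  linarith [ge_of_tendsto' hlim fun i => (sub_le_sub_right (hσ i) K).trans (hdecay i)]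

namespace GaussMap

def irrUnit : Set ℝ := Ioo 0 1 \ range ((↑) : ℚ → ℝ)

lemma mem_irrUnit {x : ℝ} : x ∈ irrUnit ↔ x ∈ Ioo 0 1 ∧ Irrational x := Iff.rfl

lemma measurableSet_irrUnit : MeasurableSet irrUnit :=
  measurableSet_Ioo.diff (countable_range _).measurableSet

lemma irrUnit_subset_Ioo : irrUnit ⊆ Ioo 0 1 := sdiff_subset

lemma irrUnit_ae_eq_Ioo : irrUnit =ᵐ[volume] Ioo (0 : ℝ) 1 :=
  sdiff_null_ae_eq_self ((countable_range _).measure_zero _)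

lemma volume_inter_irrUnit (B : Set ℝ) : volume (B ∩ irrUnit) = volume (B ∩ Ioo 0 1) :=
  measure_congr ((EventuallyEq.refl _ _).inter irrUnit_ae_eq_Ioo)

lemma volume_irrUnit : volume irrUnit = 1 := by
  simp [measure_congr irrUnit_ae_eq_Ioo]

lemma volume_le_one_of_subset_irrUnit {s : Set ℝ} (hs : s ⊆ irrUnit) : volume s ≤ 1 :=
  volume_irrUnit ▸ measure_mono hs

lemma volume_ne_top_of_subset_irrUnit {s : Set ℝ} (hs : s ⊆ irrUnit) : volume s ≠ ∞ :=
  ne_top_of_le_ne_top ENNReal.one_ne_top (volume_le_one_of_subset_irrUnit hs)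

lemma measurable_gaussMap : Measurable gaussMap :=
  measurable_fract.comp measurable_inv

lemma gaussMap_intCast_add_inv (b : ℤ) {z : ℝ} (hz : z ∈ Ico 0 1) :
    gaussMap ((b : ℝ) + z)⁻¹ = z := by
  rw [gaussMap, inv_inv, Int.fract_intCast_add, Int.fract_eq_self.2 hz]

lemma floor_intCast_add (b : ℤ) {z : ℝ} (hz : z ∈ Ico 0 1) : ⌊(b : ℝ) + z⌋ = b := by
  rw [Int.floor_intCast_add, Int.floor_eq_zero_iff.2 hz, add_zero]

lemma inv_floor_inv_add_gaussMap (x : ℝ) : ((⌊x⁻¹⌋ : ℝ) + gaussMap x)⁻¹ = x := by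
  rw [gaussMap, Int.floor_add_fract, inv_inv]

lemma natCast_add_inv_mem_irrUnit {b : ℕ} (hb : 1 ≤ b) {z : ℝ} (hz : z ∈ irrUnit) :
    ((b : ℝ) + z)⁻¹ ∈ irrUnit := by
  obtain ⟨⟨hz0, -⟩, hzirr⟩ := mem_irrUnit.1 hz
  have hb1 : (1 : ℝ) ≤ b := by exact_mod_cast hb
  refine mem_irrUnit.2 ⟨⟨by positivity, inv_lt_one_of_one_lt₀ (by linarith)⟩, ?_⟩
  exact (hzirr.natCast_add b).inv

lemma gaussMap_mem_irrUnit {x : ℝ} (hx : x ∈ irrUnit) : gaussMap x ∈ irrUnit := by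
  obtain ⟨⟨hx0, -⟩, hxirr⟩ := mem_irrUnit.1 hx
  have hirr : Irrational (gaussMap x) := hxirr.inv.sub_intCast ⌊x⁻¹⌋
  refine mem_irrUnit.2 ⟨⟨?_, Int.fract_lt_one _⟩, hirr⟩
  exact (Int.fract_nonneg _).lt_of_ne fun h => hirr.ne_int 0 (by simpa [gaussMap] using h.symm)

lemma iterate_gaussMap_mem_irrUnit {x : ℝ} (hx : x ∈ irrUnit) (n : ℕ) :
    gaussMap^[n] x ∈ irrUnit := by
  induction n generalizing x with
  | zero => exact hx
  | succ n ih => exact ih (gaussMap_mem_irrUnit hx)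

lemma one_le_floor_inv {x : ℝ} (hx : x ∈ irrUnit) : 1 ≤ ⌊x⁻¹⌋ := by
  obtain ⟨⟨hx0, hx1⟩, -⟩ := mem_irrUnit.1 hx
  exact Int.le_floor.2 (by exact_mod_cast (one_le_inv₀ hx0).2 hx1.le)

lemma cfDigit_iterate {k : ℕ} (hk : 1 ≤ k) (n : ℕ) (x : ℝ) :
    cfDigit k (gaussMap^[n] x) = cfDigit (n + k) x := by
  rw [cfDigit, cfDigit, ← Function.iterate_add_apply]
  congr 3
  omega

/-- Digits are taken in `ℕ` so that digit strings are `List ℕ`. -/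
noncomputable def firstDigit (x : ℝ) : ℕ := ⌊x⁻¹⌋.toNat

noncomputable def digitList (n : ℕ) (x : ℝ) : List ℕ :=
  (List.range n).map fun i => firstDigit (gaussMap^[i] x)

lemma length_digitList (n : ℕ) (x : ℝ) : (digitList n x).length = n := by
  simp [digitList]

lemma digitList_succ (n : ℕ) (x : ℝ) :
    digitList (n + 1) x = firstDigit x :: digitList n (gaussMap x) := by
  simp only [digitList, List.range_succ_eq_map, List.map_cons, List.map_map]
  rfl

lemma natCast_firstDigit {x : ℝ} (hx : x ∈ irrUnit) : (firstDigit x : ℤ) = ⌊x⁻¹⌋ :=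
  Int.toNat_of_nonneg (zero_le_one.trans (one_le_floor_inv hx))

lemma one_le_of_mem_digitList {x : ℝ} (hx : x ∈ irrUnit) {n b : ℕ} (hb : b ∈ digitList n x) :
    1 ≤ b := by
  obtain ⟨i, -, rfl⟩ := List.mem_map.1 hb
  have := natCast_firstDigit (iterate_gaussMap_mem_irrUnit hx i) ▸
    one_le_floor_inv (iterate_gaussMap_mem_irrUnit hx i)
  exact_mod_cast this

lemma getD_digitList {x : ℝ} (hx : x ∈ irrUnit) {k n : ℕ} (hk : 1 ≤ k) (hkn : k ≤ n) :
    ((digitList n x).getD (k - 1) 0 : ℤ) = cfDigit k x := by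
  rw [digitList, List.getD_eq_getElem?_getD, List.getElem?_map, List.getElem?_range (by omega)]
  exact natCast_firstDigit (iterate_gaussMap_mem_irrUnit hx _)

lemma measurable_firstDigit : Measurable firstDigit :=
  measurable_from_top.comp (Int.measurable_floor.comp measurable_inv)

lemma measurableSet_digitList_eq : ∀ (n : ℕ) (w : List ℕ), MeasurableSet {x | digitList n x = w}
  | 0, _ => MeasurableSet.const ([] = _)
  | n + 1, [] => by simp [digitList_succ]
  | n + 1, b :: w => by
    simp only [digitList_succ, List.cons.injEq, ofPred_and]
    exact (measurable_firstDigit (measurableSet_singleton b)).inter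
      (measurable_gaussMap (measurableSet_digitList_eq n w))

/-- The inverse branch of `gaussMap^[w.length]` with digit string `w`:
`invBranch [b₁, …, bₙ] y = 1/(b₁ + 1/(b₂ + ⋯ + 1/(bₙ + y)))`. -/
noncomputable def invBranch : List ℕ → ℝ → ℝ
  | [], y => y
  | b :: w, y => ((b : ℝ) + invBranch w y)⁻¹

variable {w : List ℕ} {y : ℝ}

lemma invBranch_mem_irrUnit (hw : ∀ b ∈ w, 1 ≤ b) (hy : y ∈ irrUnit) :
    invBranch w y ∈ irrUnit := by
  induction w with
  | nil => exact hy
  | cons b w ih =>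
    simp only [List.mem_cons, forall_eq_or_imp] at hw
    exact natCast_add_inv_mem_irrUnit hw.1 (ih hw.2)

lemma gaussMap_invBranch_cons (b : ℕ) (hw : ∀ b ∈ w, 1 ≤ b) (hy : y ∈ irrUnit) :
    gaussMap (invBranch (b :: w) y) = invBranch w y := by
  have h := irrUnit_subset_Ioo (invBranch_mem_irrUnit hw hy)
  exact_mod_cast gaussMap_intCast_add_inv b ⟨h.1.le, h.2⟩

lemma iterate_gaussMap_invBranch (hw : ∀ b ∈ w, 1 ≤ b) (hy : y ∈ irrUnit) :
    gaussMap^[w.length] (invBranch w y) = y := by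
  induction w with
  | nil => rfl
  | cons b w ih =>
    simp only [List.mem_cons, forall_eq_or_imp] at hw
    rw [List.length_cons, Function.iterate_succ_apply, gaussMap_invBranch_cons b hw.2 hy, ih hw.2]

lemma digitList_invBranch (hw : ∀ b ∈ w, 1 ≤ b) (hy : y ∈ irrUnit) :
    digitList w.length (invBranch w y) = w := by
  induction w with
  | nil => rfl
  | cons b w ih =>
    simp only [List.mem_cons, forall_eq_or_imp] at hw
    have h := irrUnit_subset_Ioo (invBranch_mem_irrUnit hw.2 hy)
    have hfloor : ⌊(b : ℝ) + invBranch w y⌋ = b := by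
      exact_mod_cast floor_intCast_add b ⟨h.1.le, h.2⟩
    rw [List.length_cons, digitList_succ, gaussMap_invBranch_cons b hw.2 hy, ih hw.2]
    simp [firstDigit, invBranch, hfloor]

lemma invBranch_digitList {x : ℝ} (hx : x ∈ irrUnit) (n : ℕ) :
    invBranch (digitList n x) (gaussMap^[n] x) = x := by
  induction n generalizing x with
  | zero => rfl
  | succ n ih =>
    rw [digitList_succ, Function.iterate_succ_apply, invBranch, ih (gaussMap_mem_irrUnit hx)]
    exact_mod_cast (natCast_firstDigit hx).symm ▸ inv_floor_inv_add_gaussMap x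

/-- The coefficients are the continuants of `w`; the disjunct `q' = 0` covers only `w = []`. -/
lemma exists_invBranch_eq_div (hw : ∀ b ∈ w, 1 ≤ b) :
    ∃ p p' q q' : ℝ, 0 ≤ p ∧ 0 ≤ p' ∧ 1 ≤ q ∧ 0 ≤ q' ∧ q' ≤ q ∧ |p' * q - p * q'| = 1 ∧
      (p' ≤ p ∨ q' = 0) ∧ ∀ y, 0 ≤ y → invBranch w y = (p + p' * y) / (q + q' * y) := by
  induction w with
  | nil => exact ⟨0, 1, 1, 0, by norm_num, by norm_num, le_rfl, le_rfl, zero_le_one, by norm_num,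
      Or.inr rfl, fun y _ => by simp [invBranch]⟩
  | cons b w ih =>
    simp only [List.mem_cons, forall_eq_or_imp] at hw
    obtain ⟨p, p', q, q', hp, hp', hq, hq', hq'q, hdet, hcases, heq⟩ := ih hw.2
    have hb : (1 : ℝ) ≤ b := by exact_mod_cast hw.1
    have hQ' : b * q' + p' ≤ b * q + p := by
      rcases hcases with h | h
      · nlinarith
      · subst h
        rw [mul_zero, sub_zero, abs_of_nonneg (by positivity)] at hdet
        nlinarith
    refine ⟨q, q', b * q + p, b * q' + p', by linarith, hq', by nlinarith, by positivity, hQ',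
      ?_, Or.inl hq'q, fun y hy => ?_⟩
    · rw [← hdet, ← abs_neg]; ring_nf
    · have : 0 < q + q' * y := by positivity
      rw [invBranch, heq y hy, ← inv_div]
      field_simp
      ring

lemma exists_hasDerivAt_invBranch (hw : ∀ b ∈ w, 1 ≤ b) :
    ∃ f' : ℝ → ℝ, (∀ x, 0 < x → HasDerivAt (invBranch w) (f' x) x) ∧
      ∀ x, 0 ≤ x → ∀ y, 0 ≤ y → y ≤ 1 → |f' x| ≤ 4 * |f' y| := by
  obtain ⟨p, p', q, q', hp, hp', hq, hq', hq'q, hdet, -, heq⟩ := exists_invBranch_eq_div hw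
  have hden : ∀ x, 0 ≤ x → 0 < q + q' * x := fun x hx => by positivity
  have habs : ∀ x, 0 ≤ x → |(p' * q - p * q') / (q + q' * x) ^ 2| = 1 / (q + q' * x) ^ 2 :=
    fun x hx => by rw [abs_div, hdet, abs_of_pos (by positivity)]
  refine ⟨fun x => (p' * q - p * q') / (q + q' * x) ^ 2, fun x hx => ?_, fun x hx y hy0 hy1 => ?_⟩
  · have hmob := (((hasDerivAt_id x).const_mul p').const_add p).div
      (((hasDerivAt_id x).const_mul q').const_add q) (hden x hx.le).ne'
    refine (hmob.congr_deriv (by simp only [id, mul_one]; ring)).congr_of_eventuallyEq ?_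
    filter_upwards [Ioi_mem_nhds hx] with y hy using heq y hy.le
  · have hx' : q ≤ q + q' * x := by nlinarith
    have hy' : q + q' * y ≤ 2 * q := by nlinarith
    have hyq := hden y hy0
    rw [habs x hx, habs y hy0]
    calc 1 / (q + q' * x) ^ 2 ≤ 1 / q ^ 2 := by gcongr
      _ = 4 * (1 / (2 * q) ^ 2) := by ring
      _ ≤ 4 * (1 / (q + q' * y) ^ 2) := by gcongr

lemma volume_invBranch_image_mul_le (hw : ∀ b ∈ w, 1 ≤ b) {s t : Set ℝ}
    (hs : MeasurableSet s) (ht : MeasurableSet t) (hsI : s ⊆ irrUnit) (htI : t ⊆ irrUnit) :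
    volume (invBranch w '' s) * volume t ≤ 4 * volume s * volume (invBranch w '' t) := by
  obtain ⟨f', hf', hC⟩ := exists_hasDerivAt_invBranch hw
  have hinj : InjOn (invBranch w) irrUnit :=
    LeftInvOn.injOn (f₁' := gaussMap^[w.length]) fun y hy => iterate_gaussMap_invBranch hw hy
  simpa using volume_image_mul_le_of_abs_deriv_le_mul
    (fun x hx => (hf' x (irrUnit_subset_Ioo hx).1).hasDerivWithinAt) hinj
    (fun x hx y hy => hC x (irrUnit_subset_Ioo hx).1.le y (irrUnit_subset_Ioo hy).1.le
      (irrUnit_subset_Ioo hy).2.le) hs ht hsI htI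

def cfCylinder (w : List ℕ) : Set ℝ := {x | x ∈ irrUnit ∧ digitList w.length x = w}

lemma measurableSet_cfCylinder (w : List ℕ) : MeasurableSet (cfCylinder w) :=
  measurableSet_irrUnit.inter (measurableSet_digitList_eq _ _)

lemma cfCylinder_inter_preimage (hw : ∀ b ∈ w, 1 ≤ b) (B : Set ℝ) :
    cfCylinder w ∩ gaussMap^[w.length] ⁻¹' B = invBranch w '' (B ∩ irrUnit) := by
  ext x
  constructor
  · rintro ⟨⟨hx, hxw⟩, hxB⟩
    refine ⟨_, ⟨hxB, iterate_gaussMap_mem_irrUnit hx _⟩, ?_⟩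
    simpa [hxw] using invBranch_digitList hx w.length
  · rintro ⟨y, ⟨hyB, hy⟩, rfl⟩
    exact ⟨⟨invBranch_mem_irrUnit hw hy, digitList_invBranch hw hy⟩,
      by rwa [mem_preimage, iterate_gaussMap_invBranch hw hy]⟩

def digitSet (n : ℕ) (P : List ℕ → Prop) : Set ℝ := {x | x ∈ irrUnit ∧ P (digitList n x)}

def admissibleWords (n : ℕ) (P : List ℕ → Prop) : Set (List ℕ) :=
  {w | P w ∧ w.length = n ∧ ∀ b ∈ w, 1 ≤ b}

variable {n : ℕ} {P : List ℕ → Prop}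

lemma digitSet_subset_irrUnit : digitSet n P ⊆ irrUnit := fun _ hx => hx.1

lemma digitSet_eq_biUnion : digitSet n P = ⋃ w ∈ admissibleWords n P, cfCylinder w := by
  ext x
  simp only [digitSet, admissibleWords, cfCylinder, mem_ofPred_eq, mem_iUnion, exists_prop]
  constructor
  · rintro ⟨hx, hP⟩
    exact ⟨_, ⟨hP, length_digitList n x, fun b => one_le_of_mem_digitList hx⟩, hx,
      by rw [length_digitList]⟩
  · rintro ⟨w, ⟨hP, rfl, -⟩, hx, hxw⟩
    exact ⟨hx, by rwa [hxw]⟩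

lemma measurableSet_digitSet : MeasurableSet (digitSet n P) := by
  rw [digitSet_eq_biUnion]
  exact .biUnion (to_countable _) fun w _ => measurableSet_cfCylinder w

lemma volume_digitSet_inter_preimage {B : Set ℝ} (hB : MeasurableSet B) :
    volume (digitSet n P ∩ gaussMap^[n] ⁻¹' B) =
      ∑' w : admissibleWords n P, volume (invBranch w '' (B ∩ irrUnit)) := by
  rw [digitSet_eq_biUnion, iUnion₂_inter, measure_biUnion (to_countable _)]
  · refine tsum_congr fun w => ?_
    obtain ⟨w, -, rfl, hw⟩ := w
    rw [cfCylinder_inter_preimage hw]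
  · intro w hw w' hw' hne
    refine Disjoint.mono inter_subset_left inter_subset_left (disjoint_left.2 fun x hx hx' => hne ?_)
    rw [← hx.2, ← hx'.2, hw.2.1, hw'.2.1]
  · exact fun w _ => (measurableSet_cfCylinder w).inter (measurable_gaussMap.iterate n hB)

lemma volume_digitSet :
    volume (digitSet n P) = ∑' w : admissibleWords n P, volume (invBranch w '' irrUnit) := by
  simpa using volume_digitSet_inter_preimage (n := n) (P := P) MeasurableSet.univ

lemma volume_digitSet_inter_preimage_le {B : Set ℝ} (hB : MeasurableSet B) :
    volume (digitSet n P ∩ gaussMap^[n] ⁻¹' B) ≤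
      4 * volume (B ∩ Ioo 0 1) * volume (digitSet n P) := by
  rw [volume_digitSet_inter_preimage hB, volume_digitSet, ← ENNReal.tsum_mul_left]
  refine ENNReal.tsum_le_tsum fun w => ?_
  simpa [volume_irrUnit, volume_inter_irrUnit] using
    volume_invBranch_image_mul_le w.2.2.2 (hB.inter measurableSet_irrUnit) measurableSet_irrUnit
      inter_subset_right subset_rfl

lemma le_volume_digitSet_inter_preimage {B : Set ℝ} (hB : MeasurableSet B) :
    4⁻¹ * volume (B ∩ Ioo 0 1) * volume (digitSet n P) ≤
      volume (digitSet n P ∩ gaussMap^[n] ⁻¹' B) := by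
  rw [volume_digitSet_inter_preimage hB, volume_digitSet, ← ENNReal.tsum_mul_left]
  refine ENNReal.tsum_le_tsum fun w => ?_
  have h := volume_invBranch_image_mul_le w.2.2.2 measurableSet_irrUnit
    (hB.inter measurableSet_irrUnit) subset_rfl inter_subset_right
  rw [volume_irrUnit, mul_one, volume_inter_irrUnit] at h
  calc 4⁻¹ * volume (B ∩ Ioo 0 1) * volume (invBranch w '' irrUnit)
      = 4⁻¹ * (volume (invBranch w '' irrUnit) * volume (B ∩ Ioo 0 1)) := by ring
    _ ≤ 4⁻¹ * (4 * volume (invBranch w '' (B ∩ irrUnit))) := by gcongr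
    _ = volume (invBranch w '' (B ∩ irrUnit)) := by
        rw [← mul_assoc, ENNReal.inv_mul_cancel (by norm_num) (by norm_num), one_mul]

lemma setOf_dependsOn_eq_digitSet {Φ : (ℕ → ℤ) → Prop} (hΦ : DependsOn Φ (Icc 1 n)) :
    {x | x ∈ irrUnit ∧ Φ fun k => cfDigit k x} =
      digitSet n fun w => Φ fun k => (w.getD (k - 1) 0 : ℤ) := by
  ext x
  refine and_congr_right fun hx => Iff.of_eq ?_
  exact hΦ fun k hk => (getD_digitList hx hk.1 hk.2).symm

lemma measurable_cfDigit (k : ℕ) : Measurable fun x => (cfDigit k x : ℝ) :=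
  measurable_from_top.comp (Int.measurable_floor.comp (measurable_gaussMap.iterate _).inv)

lemma volume_le_cfDigit_one_inter_Ioo_le {N : ℝ} (hN : 0 < N) :
    volume ({y | N ≤ (cfDigit 1 y : ℝ)} ∩ Ioo 0 1) ≤ ENNReal.ofReal N⁻¹ := by
  calc volume ({y | N ≤ (cfDigit 1 y : ℝ)} ∩ Ioo 0 1) ≤ volume (Ioc 0 N⁻¹) := by
        refine measure_mono ?_
        rintro y ⟨hy, hy0, -⟩
        have : N ≤ y⁻¹ := hy.trans (Int.floor_le _)
        exact ⟨hy0, by simpa using inv_anti₀ hN this⟩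
    _ = ENNReal.ofReal N⁻¹ := by rw [Real.volume_Ioc, sub_zero]

lemma volume_le_cfDigit_le {k : ℕ} (hk : 1 ≤ k) {N : ℝ} (hN : 0 < N) :
    volume {x | x ∈ irrUnit ∧ N ≤ (cfDigit k x : ℝ)} ≤ ENNReal.ofReal (4 / N) := by
  have hset : {x | x ∈ irrUnit ∧ N ≤ (cfDigit k x : ℝ)} =
      digitSet (k - 1) (fun _ => True) ∩ gaussMap^[k - 1] ⁻¹' {y | N ≤ (cfDigit 1 y : ℝ)} := by
    ext x
    simp [digitSet, cfDigit_iterate le_rfl, Nat.sub_add_cancel hk]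
  rw [hset]
  calc _ ≤ 4 * volume ({y | N ≤ (cfDigit 1 y : ℝ)} ∩ Ioo 0 1) * volume (digitSet (k - 1) _) :=
        volume_digitSet_inter_preimage_le (measurableSet_le measurable_const (measurable_cfDigit 1))
    _ ≤ 4 * ENNReal.ofReal N⁻¹ * 1 := by
        gcongr
        exacts [volume_le_cfDigit_one_inter_Ioo_le hN,
          volume_le_one_of_subset_irrUnit digitSet_subset_irrUnit]
    _ = ENNReal.ofReal (4 / N) := by
        rw [mul_one, div_eq_mul_inv, ENNReal.ofReal_mul (by norm_num), ENNReal.ofReal_ofNat]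

lemma volume_exists_le_cfDigit_le (n : ℕ) {N : ℝ} (hN : 0 < N) :
    volume {x | x ∈ irrUnit ∧ ∃ k, 1 ≤ k ∧ k ≤ n ∧ N ≤ (cfDigit k x : ℝ)} ≤
      ENNReal.ofReal (4 * n / N) := by
  calc _ ≤ volume (⋃ k ∈ Finset.Icc 1 n, {x | x ∈ irrUnit ∧ N ≤ (cfDigit k x : ℝ)}) := by
        refine measure_mono ?_
        rintro x ⟨hx, k, hk1, hkn, hxk⟩
        exact mem_iUnion₂.2 ⟨k, Finset.mem_Icc.2 ⟨hk1, hkn⟩, hx, hxk⟩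
    _ ≤ ∑ k ∈ Finset.Icc 1 n, volume {x | x ∈ irrUnit ∧ N ≤ (cfDigit k x : ℝ)} :=
        measure_biUnion_finset_le _ _
    _ ≤ ∑ _k ∈ Finset.Icc 1 n, ENNReal.ofReal (4 / N) :=
        Finset.sum_le_sum fun k hk => volume_le_cfDigit_le (Finset.mem_Icc.1 hk).1 hN
    _ = ENNReal.ofReal (4 * n / N) := by
        rw [Finset.sum_const, Nat.card_Icc, Nat.add_sub_cancel, nsmul_eq_mul,
          ← ENNReal.ofReal_natCast, ← ENNReal.ofReal_mul (Nat.cast_nonneg _), mul_div_assoc']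
        ring_nf

def smallDigitSet (R : ℕ) (M : ℝ) : Set ℝ :=
  {x | x ∈ irrUnit ∧ ∀ k, 1 ≤ k → k ≤ R → (cfDigit k x : ℝ) < M}

lemma exists_smallDigitSet_eq_digitSet (R : ℕ) (M : ℝ) :
    ∃ P, smallDigitSet R M = digitSet R P :=
  ⟨_, setOf_dependsOn_eq_digitSet (Φ := fun a => ∀ k, 1 ≤ k → k ≤ R → (a k : ℝ) < M)
    fun a b h => by
      simp only [eq_iff_iff]
      exact forall_congr' fun k => forall_congr' fun hk1 => forall_congr' fun hkR => by
        rw [h k (mem_Icc.2 ⟨hk1, hkR⟩)]⟩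

lemma smallDigitSet_succ (R : ℕ) (M : ℝ) :
    smallDigitSet (R + 1) M =
      smallDigitSet R M \ gaussMap^[R] ⁻¹' {y | M ≤ (cfDigit 1 y : ℝ)} := by
  ext x
  simp only [smallDigitSet, Set.mem_sdiff, mem_ofPred_eq, Set.mem_preimage, cfDigit_iterate le_rfl,
    not_le]
  constructor
  · rintro ⟨hx, h⟩
    exact ⟨⟨hx, fun k hk1 hkR => h k hk1 (by omega)⟩, h _ (by omega) le_rfl⟩
  · rintro ⟨⟨hx, h⟩, hR⟩
    refine ⟨hx, fun k hk1 hkR => ?_⟩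
    rcases Nat.lt_or_ge k (R + 1) with hk | hk
    · exact h k hk1 (by omega)
    · rwa [show k = R + 1 by omega]

lemma ofReal_pow_le_volume_smallDigitSet {M : ℝ} (hM : 4 < M) (R : ℕ) :
    ENNReal.ofReal ((1 - 4 / M) ^ R) ≤ volume (smallDigitSet R M) := by
  induction R with
  | zero =>
    have : smallDigitSet 0 M = irrUnit := by
      ext x
      exact ⟨fun h => h.1, fun hx => ⟨hx, fun k hk1 hk0 => absurd hk1 (by omega)⟩⟩
    simp [this, volume_irrUnit]
  | succ R ih =>
    obtain ⟨P, hP⟩ := exists_smallDigitSet_eq_digitSet R M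
    have hB : MeasurableSet {y | M ≤ (cfDigit 1 y : ℝ)} :=
      measurableSet_le measurable_const (measurable_cfDigit 1)
    have hinter : volume (smallDigitSet R M ∩ gaussMap^[R] ⁻¹' {y | M ≤ (cfDigit 1 y : ℝ)}) ≤
        ENNReal.ofReal (4 / M) * volume (smallDigitSet R M) := by
      rw [hP]
      refine (volume_digitSet_inter_preimage_le hB).trans ?_
      gcongr
      rw [div_eq_mul_inv, ENNReal.ofReal_mul (by norm_num), ENNReal.ofReal_ofNat]
      gcongr
      exact volume_le_cfDigit_one_inter_Ioo_le (by linarith)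
    calc ENNReal.ofReal ((1 - 4 / M) ^ (R + 1))
        = ENNReal.ofReal (1 - 4 / M) * ENNReal.ofReal ((1 - 4 / M) ^ R) := by
          rw [← ENNReal.ofReal_mul (sub_nonneg.2 ((div_le_one (by linarith)).2 hM.le)), pow_succ']
      _ ≤ (1 - ENNReal.ofReal (4 / M)) * volume (smallDigitSet R M) := by
          rw [ENNReal.ofReal_sub _ (by positivity), ENNReal.ofReal_one]
          gcongr
      _ ≤ volume (smallDigitSet (R + 1) M) := by
          rw [smallDigitSet_succ]
          exact one_sub_mul_le_measure_diff
            (volume_ne_top_of_subset_irrUnit fun _ hx => hx.1) hinter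

lemma volume_digitSet_diff_preimage_le {B : Set ℝ} (hB : MeasurableSet B) :
    volume (digitSet n P \ gaussMap^[n] ⁻¹' B) ≤
      (1 - 4⁻¹ * volume (B ∩ Ioo 0 1)) * volume (digitSet n P) :=
  measure_diff_le_one_sub_mul (measurable_gaussMap.iterate n hB)
    (volume_ne_top_of_subset_irrUnit digitSet_subset_irrUnit) (le_volume_digitSet_inter_preimage hB)

variable {c : ℝ}

lemma ofReal_exp_le_volume_smallDigitSet (hc : 0 < c) {R N : ℕ} (hRN : R ≤ N)
    (h8 : 8 ≤ c * N) :
    ENNReal.ofReal (Real.exp (-(8 / c))) ≤ volume (smallDigitSet R (c * N)) := by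
  have hN : (0 : ℝ) < N := pos_of_mul_pos_right (by linarith) hc.le
  have hM : 0 < c * N := by linarith
  refine (ENNReal.ofReal_le_ofReal ?_).trans
    (ofReal_pow_le_volume_smallDigitSet (by linarith) R)
  refine (Real.exp_le_exp.2 ?_).trans (Real.exp_neg_le_one_sub_pow (t := 4 / (c * N))
    (by positivity) (by rw [div_le_iff₀ hM]; linarith) R)
  rw [neg_le_neg_iff, show 2 * (4 / (c * N)) * R = 8 / c * (R / N) by field_simp; ring]
  exact mul_le_of_le_one_right (by positivity) (div_le_one_of_le₀ (by exact_mod_cast hRN) hN.le)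

lemma volume_digitSet_diff_preimage_smallDigitSet_le (hc : 0 < c) {R N : ℕ} (hRN : R ≤ N)
    (h8 : 8 ≤ c * N) :
    volume (digitSet n P \ gaussMap^[n] ⁻¹' smallDigitSet R (c * N)) ≤
      ENNReal.ofReal (1 - Real.exp (-(8 / c)) / 4) * volume (digitSet n P) := by
  obtain ⟨Q, hQ⟩ := exists_smallDigitSet_eq_digitSet R (c * N)
  refine (volume_digitSet_diff_preimage_le (hQ ▸ measurableSet_digitSet)).trans ?_
  rw [inter_eq_left.2 ((hQ ▸ digitSet_subset_irrUnit).trans irrUnit_subset_Ioo),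
    ENNReal.ofReal_sub _ (by positivity), ENNReal.ofReal_one, div_eq_inv_mul,
    ENNReal.ofReal_mul (by norm_num), ENNReal.ofReal_inv_of_pos (by norm_num),
    ENNReal.ofReal_ofNat]
  gcongr
  exact ofReal_exp_le_volume_smallDigitSet hc hRN h8

def largeMaxSet (c : ℝ) (L j₀ J : ℕ) : Set ℝ :=
  {x | x ∈ irrUnit ∧ ∀ j, j₀ < j → j ≤ J →
    ∃ k, 1 ≤ k ∧ k ≤ L ^ j ∧ c * (L ^ j : ℕ) ≤ (cfDigit k x : ℝ)}

variable {L j₀ J : ℕ}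

lemma exists_largeMaxSet_eq_digitSet (hL : 1 ≤ L) :
    ∃ P, largeMaxSet c L j₀ J = digitSet (L ^ J) P := by
  refine ⟨_, setOf_dependsOn_eq_digitSet (Φ := fun a => ∀ j, j₀ < j → j ≤ J →
    ∃ k, 1 ≤ k ∧ k ≤ L ^ j ∧ c * (L ^ j : ℕ) ≤ (a k : ℝ)) fun a b h => ?_⟩
  have hab : ∀ j ≤ J, ∀ k, 1 ≤ k → k ≤ L ^ j → a k = b k := fun j hj k hk1 hkj =>
    h k (mem_Icc.2 ⟨hk1, hkj.trans (Nat.pow_le_pow_right hL hj)⟩)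
  simp only [eq_iff_iff]
  refine forall_congr' fun j => forall_congr' fun _ => forall_congr' fun hj => ?_
  exact exists_congr fun k => and_congr_right fun hk1 => and_congr_right fun hkj => by
    rw [hab j hj k hk1 hkj]

lemma largeMaxSet_succ_subset (hJ : j₀ ≤ J) :
    largeMaxSet c L j₀ (J + 1) ⊆
      {x | x ∈ irrUnit ∧ ∃ k, 1 ≤ k ∧ k ≤ L ^ J ∧ c * (L ^ (J + 1) : ℕ) ≤ (cfDigit k x : ℝ)} ∪
      (largeMaxSet c L j₀ J \
        gaussMap^[L ^ J] ⁻¹' smallDigitSet (L ^ (J + 1) - L ^ J) (c * (L ^ (J + 1) : ℕ))) := by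
  rintro x ⟨hx, hmax⟩
  obtain ⟨k, hk1, hkJ, hxk⟩ := hmax (J + 1) (by omega) le_rfl
  rcases le_or_gt k (L ^ J) with hkn | hkn
  · exact Or.inl ⟨hx, k, hk1, hkn, hxk⟩
  refine Or.inr ⟨⟨hx, fun j hj hjJ => hmax j hj (by omega)⟩, fun hsmall => ?_⟩
  have := hsmall.2 (k - L ^ J) (by omega) (by omega)
  rw [cfDigit_iterate (by omega), Nat.add_sub_cancel' hkn.le] at this
  exact this.not_ge hxk

lemma volume_largeMaxSet_succ_le (hc : 0 < c) (hL : 2 ≤ L) (hJ : j₀ ≤ J)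
    (h8 : 8 ≤ c * (L ^ (J + 1) : ℕ)) :
    volume.real (largeMaxSet c L j₀ (J + 1)) ≤
      4 / (c * L) + (1 - Real.exp (-(8 / c)) / 4) * volume.real (largeMaxSet c L j₀ J) := by
  have hη : Real.exp (-(8 / c)) ≤ 1 := Real.exp_le_one_iff.2 (neg_nonpos.2 (by positivity))
  have hhead := volume_exists_le_cfDigit_le (L ^ J) (N := c * (L ^ (J + 1) : ℕ)) (by linarith)
  rw [show 4 * ((L ^ J : ℕ) : ℝ) / (c * (L ^ (J + 1) : ℕ)) = 4 / (c * L) by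
    push_cast; field_simp; ring] at hhead
  obtain ⟨P, hP⟩ := exists_largeMaxSet_eq_digitSet (c := c) (L := L) (j₀ := j₀) (J := J)
    (by omega)
  have hblock := volume_digitSet_diff_preimage_smallDigitSet_le (n := L ^ J) (P := P) hc
    (Nat.sub_le (L ^ (J + 1)) (L ^ J)) h8
  rw [← hP] at hblock
  have hle := (measure_mono (largeMaxSet_succ_subset hJ)).trans
    ((measure_union_le _ _).trans (add_le_add hhead hblock))
  have hfin := volume_ne_top_of_subset_irrUnit (fun _ hx => hx.1 : largeMaxSet c L j₀ J ⊆ _)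
  have := ENNReal.toReal_mono (by finiteness) hle
  rwa [ENNReal.toReal_add (by finiteness) (by finiteness), ENNReal.toReal_mul,
    ENNReal.toReal_ofReal (show 0 ≤ 4 / (c * L) by positivity),
    ENNReal.toReal_ofReal (show 0 ≤ 1 - Real.exp (-(8 / c)) / 4 by linarith)] at this

def eventuallyLargeMax (c : ℝ) (m₀ : ℕ) : Set ℝ :=
  {x | ∀ m : ℕ, m₀ ≤ m → ∃ k : ℕ, 1 ≤ k ∧ k ≤ m ∧ c * m ≤ (cfDigit k x : ℝ)}

lemma measureReal_eventuallyLargeMax_inter_irrUnit_le (hc : 0 < c) (m₀ : ℕ) (hL : 2 ≤ L) :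
    volume.real (eventuallyLargeMax c m₀ ∩ irrUnit) ≤ 16 / (c * Real.exp (-(8 / c))) / L := by
  set η := Real.exp (-(8 / c))
  have hη : 0 < η := Real.exp_pos _
  have hη1 : η ≤ 1 := Real.exp_le_one_iff.2 (neg_nonpos.2 (by positivity))
  have hL1 : (1 : ℝ) < L := by exact_mod_cast hL
  obtain ⟨j₀, hj₀⟩ := pow_unbounded_of_one_lt (max (m₀ : ℝ) (8 / c)) hL1
  have hlarge : ∀ j, j₀ < j → max (m₀ : ℝ) (8 / c) ≤ ((L ^ j : ℕ) : ℝ) := fun j hj => by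
    push_cast
    exact hj₀.le.trans (pow_le_pow_right₀ hL1.le hj.le)
  have hsub : ∀ J, eventuallyLargeMax c m₀ ∩ irrUnit ⊆ largeMaxSet c L j₀ J :=
    fun J x ⟨hx, hxirr⟩ =>
      ⟨hxirr, fun j hj _ => hx _ (by exact_mod_cast (le_max_left _ _).trans (hlarge j hj))⟩
  have h8 : ∀ i, 8 ≤ c * ((L ^ (j₀ + i + 1) : ℕ) : ℝ) := fun i => by
    have := (le_max_right _ _).trans
      (hlarge (j₀ + i + 1) (Nat.lt_succ_of_le (Nat.le_add_right j₀ i)))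
    rwa [div_le_iff₀' hc] at this
  have := le_div_one_sub_of_le_add_mul (v := fun i => volume.real (largeMaxSet c L j₀ (j₀ + i)))
    (ρ := 1 - η / 4) (by linarith) (by linarith)
    (fun i => volume_largeMaxSet_succ_le hc hL (Nat.le_add_right _ _) (h8 i))
    (fun i => measureReal_mono (hsub _) (volume_ne_top_of_subset_irrUnit fun _ hx => hx.1))
  calc _ ≤ 4 / (c * L) / (1 - (1 - η / 4)) := this
    _ = 16 / (c * η) / L := by rw [sub_sub_cancel]; field_simp; ring

lemma volume_eventuallyLargeMax_inter_irrUnit (hc : 0 < c) (m₀ : ℕ) :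
    volume (eventuallyLargeMax c m₀ ∩ irrUnit) = 0 := by
  have hle : volume.real (eventuallyLargeMax c m₀ ∩ irrUnit) ≤ 0 :=
    ge_of_tendsto (tendsto_const_div_atTop_nhds_zero_nat _) (eventually_atTop.2
      ⟨2, fun L hL => measureReal_eventuallyLargeMax_inter_irrUnit_le hc m₀ hL⟩)
  exact (measureReal_eq_zero_iff (volume_ne_top_of_subset_irrUnit inter_subset_right)).1
    (le_antisymm hle measureReal_nonneg)

end GaussMap

open GaussMap in
/-- For any `c > 0`, the set of `x` whose maximal continued fraction digit among the
first `m` digits is eventually always at least `c·m` has Gauss measure zero. -/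
theorem cf_max_digit_eah_zero (c : ℝ) (hc : 0 < c) :
    gaussMeasure {x : ℝ | ∃ m₀ : ℕ, ∀ m : ℕ, m₀ ≤ m →
      ∃ k : ℕ, 1 ≤ k ∧ k ≤ m ∧ c * m ≤ (cfDigit k x : ℝ)} = 0 := by
  refine withDensity_absolutelyContinuous _ _ ?_
  rw [Measure.restrict_apply' measurableSet_Icc,
    ← measure_congr ((EventuallyEq.refl _ _).inter (irrUnit_ae_eq_Ioo.trans Ioo_ae_eq_Icc)),
    ofPred_exists, iUnion_inter]
  exact measure_iUnion_null fun m₀ => volume_eventuallyLargeMax_inter_irrUnit hc m₀
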